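/- Suppose the birth–death chain started at k hits 0 with probability 1. Then for every n ≥ 1, E[G_{T_∂}^n] = min(x_n, x_k)/(t_{n−1} l_n), where G_{T_∂}^n is the total number of times m with 0 ≤ m ≤ T_∂ − 1 and X_m = n. -/
import Mathlib


open MeasureTheory Filter Topology Finset
open scoped ENNReal NNReal Classical

/-- Partial products `t_n = (l_1 ⋯ l_n)/(r_1 ⋯ r_n)`, with `t_0 = 1`. -/
noncomputable def tp (l r : ℕ → ℝ) (n : ℕ) : ℝ :=
  (∏ i ∈ Finset.Icc 1 n, l i) / (∏ i ∈ Finset.Icc 1 n, r i)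

/-- `x_n = Σ_{i=0}^{n-1} t_i`. -/
noncomputable def xp (l r : ℕ → ℝ) (n : ℕ) : ℝ :=
  ∑ i ∈ Finset.range n, tp l r i

/-- The natural filtration of the process `X` (σ-algebra generated by `X_0, …, X_m`). -/
def natFilt {Ω : Type*} (X : ℕ → Ω → ℕ) (m : ℕ) : MeasurableSpace Ω :=
  ⨆ i ∈ Finset.range (m + 1), MeasurableSpace.comap (X i) ⊤

/-- A birth–death chain on ℕ started at `k`, with up–probabilities `r n` and
down–probabilities `l n` for states `n ≥ 1`, and `0` absorbing.  The Markov
property is encoded by conditioning on arbitrary events of the natural filtration. -/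
structure IsBDChain {Ω : Type*} [MeasurableSpace Ω] (P : Measure Ω)
    (X : ℕ → Ω → ℕ) (k : ℕ) (l r : ℕ → ℝ) : Prop where
  isProb : IsProbabilityMeasure P
  one_le_k : 1 ≤ k
  l_pos : ∀ n, 1 ≤ n → 0 < l n
  r_pos : ∀ n, 1 ≤ n → 0 < r n
  lr_one : ∀ n, 1 ≤ n → l n + r n = 1
  meas : ∀ m, Measurable (X m)
  init : ∀ᵐ ω ∂P, X 0 ω = k
  absorb : ∀ᵐ ω ∂P, ∀ m, X m ω = 0 → X (m + 1) ω = 0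
  step_up : ∀ m n, 1 ≤ n → ∀ A : Set Ω, MeasurableSet[natFilt X m] A →
    P (A ∩ {ω | X m ω = n ∧ X (m + 1) ω = n + 1}) =
      ENNReal.ofReal (r n) * P (A ∩ {ω | X m ω = n})
  step_down : ∀ m n, 1 ≤ n → ∀ A : Set Ω, MeasurableSet[natFilt X m] A →
    P (A ∩ {ω | X m ω = n ∧ X (m + 1) ω = n - 1}) =
      ENNReal.ofReal (l n) * P (A ∩ {ω | X m ω = n})

/-- A (finite-valued) stopping time for the natural filtration of `X`. -/
def IsBDStop {Ω : Type*} (X : ℕ → Ω → ℕ) (T : Ω → ℕ) : Prop :=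
  ∀ m, MeasurableSet[natFilt X m] {ω | T ω = m}

/-- An extended-ℕ-valued stopping time for the natural filtration of `X`. -/
def IsBDStopE {Ω : Type*} (X : ℕ → Ω → ℕ) (T : Ω → ℕ∞) : Prop :=
  ∀ m : ℕ, MeasurableSet[natFilt X m] {ω | T ω = (m : ℕ∞)}

/-- First hitting time of the set `S ⊆ ℕ` by the path `m ↦ X m ω`, valued in `ℕ∞`. -/
noncomputable def hitTime {Ω : Type*} (X : ℕ → Ω → ℕ) (S : Set ℕ) (ω : Ω) : ℕ∞ :=
  sInf ((fun m : ℕ => (m : ℕ∞)) '' {m | X m ω ∈ S})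

/-- `T_∂`: the first hitting time of `0`, with value `∞` if `0` is never hit. -/
noncomputable def hit0 {Ω : Type*} (X : ℕ → Ω → ℕ) (ω : Ω) : ℕ∞ :=
  hitTime X {0} ω

/-- `G_T^n`: the number of times `m` with `0 ≤ m ≤ T-1` and `X_m = n` (finite `T`). -/
def count {Ω : Type*} (X : ℕ → Ω → ℕ) (n : ℕ) (T : Ω → ℕ) (ω : Ω) : ℕ :=
  ((Finset.range (T ω)).filter fun m => X m ω = n).card

/-- `G_τ^n` for an `ℕ∞`-valued time `τ`, valued in `ℝ≥0∞`. -/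
noncomputable def countE {Ω : Type*} (X : ℕ → Ω → ℕ) (n : ℕ) (τ : Ω → ℕ∞) (ω : Ω) : ℝ≥0∞ :=
  ∑' m : ℕ, if (m : ℕ∞) < τ ω ∧ X m ω = n then 1 else 0


set_option linter.unusedSectionVars false
set_option linter.unusedVariables false

section A
variable {Ω : Type*} [MeasurableSpace Ω] {P : Measure Ω} {X : ℕ → Ω → ℕ} {k : ℕ} {l r : ℕ → ℝ}

private lemma msX (hC : IsBDChain P X k l r) (m n : ℕ) : MeasurableSet {ω | X m ω = n} :=
  (hC.meas m) (measurableSet_singleton n)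

private lemma msX2 (hC : IsBDChain P X k l r) (m n n' : ℕ) :
    MeasurableSet {ω | X m ω = n ∧ X (m + 1) ω = n'} :=
  (msX hC m n).inter (msX hC (m + 1) n')

private lemma lint_ind1 (hC : IsBDChain P X k l r) (m n : ℕ) :
    ∫⁻ ω, (if X m ω = n then (1:ℝ≥0∞) else 0) ∂P = P {ω | X m ω = n} := by
  rw [← lintegral_indicator_one (msX hC m n)]
  exact lintegral_congr fun ω => by
    by_cases h : X m ω = n <;> simp [Set.indicator_apply, Set.mem_setOf_eq, h]

private lemma lint_ind2 (hC : IsBDChain P X k l r) (m a b : ℕ) :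
    ∫⁻ ω, (if X m ω = a ∧ X (m + 1) ω = b then (1:ℝ≥0∞) else 0) ∂P
      = P {ω | X m ω = a ∧ X (m + 1) ω = b} := by
  rw [← lintegral_indicator_one (msX2 hC m a b)]
  exact lintegral_congr fun ω => by
    by_cases h : X m ω = a ∧ X (m + 1) ω = b <;>
      simp [Set.indicator_apply, Set.mem_setOf_eq, h]

private lemma path_cross {ω : Ω} (hinit : X 0 ω = k)
    (habs : ∀ m, X m ω = 0 → X (m + 1) ω = 0)
    (hstep : ∀ m n, 1 ≤ n → X m ω = n → X (m + 1) ω = n + 1 ∨ X (m + 1) ω = n - 1)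
    {N : ℕ} (hN : ∀ m, N ≤ m → X m ω = 0) (j : ℕ) :
    (∑' m : ℕ, if X m ω = j + 1 ∧ X (m + 1) ω = j then (1 : ℝ≥0∞) else 0)
      = (∑' m : ℕ, if X m ω = j ∧ X (m + 1) ω = j + 1 then (1 : ℝ≥0∞) else 0)
        + (if j < k then 1 else 0) := by
  have hdown : (∑' m : ℕ, if X m ω = j + 1 ∧ X (m + 1) ω = j then (1 : ℝ≥0∞) else 0)
      = ∑ m ∈ Finset.range N, if X m ω = j + 1 ∧ X (m + 1) ω = j then (1 : ℝ≥0∞) else 0 := by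
    apply tsum_eq_sum
    intro m hm
    have h0 : X m ω = 0 := hN m (le_of_not_gt fun h => hm (Finset.mem_range.mpr h))
    rw [if_neg]; rintro ⟨h1, -⟩; omega
  have hup : (∑' m : ℕ, if X m ω = j ∧ X (m + 1) ω = j + 1 then (1 : ℝ≥0∞) else 0)
      = ∑ m ∈ Finset.range N, if X m ω = j ∧ X (m + 1) ω = j + 1 then (1 : ℝ≥0∞) else 0 := by
    apply tsum_eq_sum
    intro m hm
    have h0 : X (m + 1) ω = 0 := hN (m + 1)
      (by have := le_of_not_gt fun h => hm (Finset.mem_range.mpr h); omega)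
    rw [if_neg]; rintro ⟨-, h1⟩; omega
  have key : ∀ m : ℕ, (if X m ω = j + 1 ∧ X (m + 1) ω = j then (1 : ℤ) else 0)
      = (if X m ω = j ∧ X (m + 1) ω = j + 1 then (1 : ℤ) else 0)
        - ((if j < X (m + 1) ω then (1 : ℤ) else 0) - (if j < X m ω then (1 : ℤ) else 0)) := by
    intro m
    rcases Nat.eq_zero_or_pos (X m ω) with h0 | h1
    · have h2 := habs m h0
      split_ifs <;> omega
    · rcases hstep m (X m ω) h1 rfl with h | h <;> (split_ifs <;> omega)
  have hZ : (∑ m ∈ Finset.range N, if X m ω = j + 1 ∧ X (m + 1) ω = j then (1 : ℤ) else 0)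
      = (∑ m ∈ Finset.range N, if X m ω = j ∧ X (m + 1) ω = j + 1 then (1 : ℤ) else 0)
        + (if j < k then 1 else 0) := by
    rw [Finset.sum_congr rfl fun m _ => key m, Finset.sum_sub_distrib,
      Finset.sum_range_sub (fun m => if j < X m ω then (1:ℤ) else 0) N]
    rw [hN N le_rfl, hinit, if_neg (Nat.not_lt_zero j)]
    ring
  have hNat : (∑ m ∈ Finset.range N, if X m ω = j + 1 ∧ X (m + 1) ω = j then (1 : ℕ) else 0)
      = (∑ m ∈ Finset.range N, if X m ω = j ∧ X (m + 1) ω = j + 1 then (1 : ℕ) else 0)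
        + (if j < k then 1 else 0) := by
    exact_mod_cast hZ
  rw [hdown, hup]
  have e1 : (∑ m ∈ Finset.range N, if X m ω = j + 1 ∧ X (m + 1) ω = j then (1 : ℝ≥0∞) else 0)
      = ((∑ m ∈ Finset.range N, if X m ω = j + 1 ∧ X (m + 1) ω = j then (1 : ℕ) else 0 : ℕ) : ℝ≥0∞) := by
    push_cast; rfl
  have e2 : (∑ m ∈ Finset.range N, if X m ω = j ∧ X (m + 1) ω = j + 1 then (1 : ℝ≥0∞) else 0)
      = ((∑ m ∈ Finset.range N, if X m ω = j ∧ X (m + 1) ω = j + 1 then (1 : ℕ) else 0 : ℕ) : ℝ≥0∞) := by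
    push_cast; rfl
  rw [e1, e2, hNat]
  push_cast
  rfl

private lemma sum_up (hC : IsBDChain P X k l r) {j : ℕ} (hj : 1 ≤ j) :
    ∑' m : ℕ, P {ω | X m ω = j ∧ X (m + 1) ω = j + 1}
      = ENNReal.ofReal (r j) * ∑' m : ℕ, P {ω | X m ω = j} := by
  rw [← ENNReal.tsum_mul_left]
  exact tsum_congr fun m => by simpa using hC.step_up m j hj Set.univ MeasurableSet.univ

private lemma sum_down (hC : IsBDChain P X k l r) (j : ℕ) :
    ∑' m : ℕ, P {ω | X m ω = j + 1 ∧ X (m + 1) ω = j}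
      = ENNReal.ofReal (l (j + 1)) * ∑' m : ℕ, P {ω | X m ω = j + 1} := by
  rw [← ENNReal.tsum_mul_left]
  exact tsum_congr fun m => by
    simpa using hC.step_down m (j + 1) (by omega) Set.univ MeasurableSet.univ

private lemma up0 (hC : IsBDChain P X k l r) (m : ℕ) :
    P {ω | X m ω = 0 ∧ X (m + 1) ω = 1} = 0 := by
  have h := hC.absorb
  rw [ae_iff] at h
  apply measure_mono_null _ h
  rintro ω ⟨h1, h2⟩
  simp only [Set.mem_setOf_eq]
  push_neg
  exact ⟨m, h1, by omega⟩

private lemma ae_step (hC : IsBDChain P X k l r) :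
    ∀ᵐ ω ∂P, ∀ m n, 1 ≤ n → X m ω = n → X (m + 1) ω = n + 1 ∨ X (m + 1) ω = n - 1 := by
  rw [ae_all_iff]
  intro m
  rw [ae_all_iff]
  intro n
  rcases Nat.eq_zero_or_pos n with hn | hn
  · exact Filter.Eventually.of_forall fun ω h => absurd h (by omega)
  haveI := hC.isProb
  have e1 : P {ω | X m ω = n ∧ X (m + 1) ω = n + 1} = ENNReal.ofReal (r n) * P {ω | X m ω = n} := by
    simpa using hC.step_up m n hn Set.univ MeasurableSet.univ
  have e2 : P {ω | X m ω = n ∧ X (m + 1) ω = n - 1} = ENNReal.ofReal (l n) * P {ω | X m ω = n} := by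
    simpa using hC.step_down m n hn Set.univ MeasurableSet.univ
  have hdisj : Disjoint {ω | X m ω = n ∧ X (m + 1) ω = n + 1} {ω | X m ω = n ∧ X (m + 1) ω = n - 1} := by
    rw [Set.disjoint_left]
    rintro ω ⟨-, h1⟩ ⟨-, h2⟩
    omega
  have hP : P ({ω | X m ω = n ∧ X (m + 1) ω = n + 1} ∪ {ω | X m ω = n ∧ X (m + 1) ω = n - 1})
      = P {ω | X m ω = n} := by
    rw [measure_union hdisj (msX2 hC m n (n - 1)), e1, e2,
      ← add_mul, ← ENNReal.ofReal_add (hC.r_pos n hn).le (hC.l_pos n hn).le,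
      add_comm (r n) (l n), hC.lr_one n hn, ENNReal.ofReal_one, one_mul]
  have hsub : {ω | X m ω = n ∧ X (m + 1) ω = n + 1} ∪ {ω | X m ω = n ∧ X (m + 1) ω = n - 1}
      ⊆ {ω | X m ω = n} := by
    rintro ω (⟨h, -⟩ | ⟨h, -⟩) <;> exact h
  have hnull : P ({ω | X m ω = n} \
      ({ω | X m ω = n ∧ X (m + 1) ω = n + 1} ∪ {ω | X m ω = n ∧ X (m + 1) ω = n - 1})) = 0 := by
    rw [measure_diff hsub ((msX2 hC m n (n + 1)).union (msX2 hC m n (n - 1))).nullMeasurableSet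
      (measure_ne_top P _), hP, tsub_self]
  rw [ae_iff]
  refine measure_mono_null ?_ hnull
  intro ω hω
  simp only [Set.mem_setOf_eq] at hω
  push_neg at hω
  obtain ⟨-, hXm, h1, h2⟩ := hω
  exact ⟨hXm, by rintro (⟨-, h⟩ | ⟨-, h⟩) <;> [exact h1 h; exact h2 h]⟩

private lemma ae_hit (hC : IsBDChain P X k l r)
    (hone : P {ω | ∃ m : ℕ, X m ω = 0} = 1) : ∀ᵐ ω ∂P, ∃ m : ℕ, X m ω = 0 := by
  haveI := hC.isProb
  have hms : MeasurableSet {ω | ∃ m : ℕ, X m ω = 0} := by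
    have : {ω | ∃ m : ℕ, X m ω = 0} = ⋃ m, {ω | X m ω = 0} := by ext; simp
    rw [this]
    exact MeasurableSet.iUnion fun m => msX hC m 0
  rw [ae_iff]
  have : {ω | ¬ ∃ m : ℕ, X m ω = 0} = {ω | ∃ m : ℕ, X m ω = 0}ᶜ := rfl
  rw [this, measure_compl hms (measure_ne_top P _), hone, measure_univ, tsub_self]

private lemma absorb_forever {ω : Ω} (habs : ∀ m, X m ω = 0 → X (m + 1) ω = 0)
    {N : ℕ} (hN : X N ω = 0) : ∀ m, N ≤ m → X m ω = 0 := by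
  intro m hm
  induction m with
  | zero => exact (Nat.le_zero.mp hm) ▸ hN
  | succ i ih =>
    rcases Nat.lt_or_ge N (i + 1) with h | h
    · exact habs i (ih (by omega))
    · exact (Nat.le_antisymm hm h) ▸ hN

end A

section B
variable {l r : ℕ → ℝ}

private lemma tp_zero (l r : ℕ → ℝ) : tp l r 0 = 1 := by simp [tp]

private lemma tp_pos (hl : ∀ n, 1 ≤ n → 0 < l n) (hr : ∀ n, 1 ≤ n → 0 < r n) (n : ℕ) :
    0 < tp l r n := by
  apply div_pos
  · exact Finset.prod_pos fun i hi => hl i (Finset.mem_Icc.mp hi).1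
  · exact Finset.prod_pos fun i hi => hr i (Finset.mem_Icc.mp hi).1

private lemma tp_succ (hl : ∀ n, 1 ≤ n → 0 < l n) (hr : ∀ n, 1 ≤ n → 0 < r n) (j : ℕ) :
    tp l r (j + 1) * r (j + 1) = tp l r j * l (j + 1) := by
  have h1 : (0:ℝ) < ∏ i ∈ Finset.Icc 1 j, r i :=
    Finset.prod_pos fun i hi => hr i (Finset.mem_Icc.mp hi).1
  have h2 : r (j + 1) ≠ 0 := (hr (j + 1) (by omega)).ne'
  unfold tp
  rw [Finset.prod_Icc_succ_top (by omega : 1 ≤ j + 1),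
    Finset.prod_Icc_succ_top (by omega : 1 ≤ j + 1)]
  field_simp

private lemma xp_succ (l r : ℕ → ℝ) (j : ℕ) : xp l r (j + 1) = xp l r j + tp l r j := by
  simp [xp, Finset.sum_range_succ]

private lemma xp_mono (hl : ∀ n, 1 ≤ n → 0 < l n) (hr : ∀ n, 1 ≤ n → 0 < r n) :
    Monotone (xp l r) := by
  intro a b hab
  exact Finset.sum_le_sum_of_subset_of_nonneg (Finset.range_subset_range.mpr hab)
    fun i _ _ => (tp_pos hl hr i).le

private lemma xp_one (l r : ℕ → ℝ) : xp l r 1 = 1 := by simp [xp, tp_zero]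

private lemma xp_nonneg (hl : ∀ n, 1 ≤ n → 0 < l n) (hr : ∀ n, 1 ≤ n → 0 < r n) (n : ℕ) :
    0 ≤ xp l r n :=
  Finset.sum_nonneg fun i _ => (tp_pos hl hr i).le

end B

section C
variable {Ω : Type*} [MeasurableSpace Ω] {P : Measure Ω} {X : ℕ → Ω → ℕ} {k : ℕ} {l r : ℕ → ℝ}

private lemma G_rec (hC : IsBDChain P X k l r)
    (hone : P {ω | ∃ m : ℕ, X m ω = 0} = 1) (j : ℕ) :
    ENNReal.ofReal (l (j + 1)) * (∑' m : ℕ, P {ω | X m ω = j + 1})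
      = (if 1 ≤ j then ENNReal.ofReal (r j) * ∑' m : ℕ, P {ω | X m ω = j} else 0)
        + (if j < k then 1 else 0) := by
  haveI := hC.isProb
  have hUmeas : Measurable fun ω => ∑' m : ℕ, if X m ω = j ∧ X (m + 1) ω = j + 1 then (1:ℝ≥0∞) else 0 :=
    Measurable.ennreal_tsum fun m =>
      Measurable.ite (msX2 hC m j (j + 1)) measurable_const measurable_const
  have h1 : ∫⁻ ω, (∑' m : ℕ, if X m ω = j + 1 ∧ X (m + 1) ω = j then (1:ℝ≥0∞) else 0) ∂P
      = ENNReal.ofReal (l (j + 1)) * ∑' m : ℕ, P {ω | X m ω = j + 1} := by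
    rw [lintegral_tsum fun m =>
      (Measurable.ite (msX2 hC m (j + 1) j) measurable_const measurable_const).aemeasurable]
    rw [tsum_congr fun m => lint_ind2 hC m (j + 1) j]
    exact sum_down hC j
  have hae : (fun ω => ∑' m : ℕ, if X m ω = j + 1 ∧ X (m + 1) ω = j then (1:ℝ≥0∞) else 0)
      =ᵐ[P] fun ω => (∑' m : ℕ, if X m ω = j ∧ X (m + 1) ω = j + 1 then (1:ℝ≥0∞) else 0)
        + (if j < k then 1 else 0) := by
    filter_upwards [hC.init, hC.absorb, ae_step hC, ae_hit hC hone] with ω h1 h2 h3 h4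
    obtain ⟨N0, hN0⟩ := h4
    exact path_cross h1 h2 h3 (absorb_forever h2 hN0) j
  have hint : ENNReal.ofReal (l (j + 1)) * (∑' m : ℕ, P {ω | X m ω = j + 1})
      = (∫⁻ ω, (∑' m : ℕ, if X m ω = j ∧ X (m + 1) ω = j + 1 then (1:ℝ≥0∞) else 0) ∂P)
        + (if j < k then 1 else 0) := by
    rw [← h1, lintegral_congr_ae hae, lintegral_add_right _ measurable_const,
      lintegral_const, measure_univ, mul_one]
  rw [hint]
  congr 1
  rw [lintegral_tsum fun m =>
    (Measurable.ite (msX2 hC m j (j + 1)) measurable_const measurable_const).aemeasurable]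
  rw [tsum_congr fun m => lint_ind2 hC m j (j + 1)]
  rcases Nat.eq_zero_or_pos j with hj | hj
  · subst hj
    rw [if_neg (by omega)]
    rw [tsum_congr fun m => up0 hC m]
    exact tsum_zero
  · rw [if_pos (show 1 ≤ j from hj)]
    exact sum_up hC hj

private lemma G_formula (hC : IsBDChain P X k l r)
    (hone : P {ω | ∃ m : ℕ, X m ω = 0} = 1) :
    ∀ n, 1 ≤ n →
      ENNReal.ofReal (tp l r (n - 1) * l n) * (∑' m : ℕ, P {ω | X m ω = n})
        = ENNReal.ofReal (min (xp l r n) (xp l r k)) := by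
  intro n hn
  induction n with
  | zero => omega
  | succ j ih =>
    rcases Nat.eq_zero_or_pos j with hj | hj
    · subst hj
      have hrec := G_rec hC hone 0
      rw [if_neg (by omega), if_pos (by have := hC.one_le_k; omega), zero_add] at hrec
      have hmin : min (xp l r 1) (xp l r k) = 1 := by
        rw [min_eq_left (by rw [xp_one] ; calc (1:ℝ) = xp l r 1 := (xp_one l r).symm
          _ ≤ xp l r k := xp_mono hC.l_pos hC.r_pos hC.one_le_k), xp_one]
      rw [show (0:ℕ) + 1 - 1 = 0 from rfl, tp_zero, one_mul, hmin, ENNReal.ofReal_one]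
      simpa using hrec
    · have ihj := ih hj
      have hrec := G_rec hC hone j
      rw [if_pos (show 1 ≤ j by omega)] at hrec
      have htp0 : (0:ℝ) ≤ tp l r j := (tp_pos hC.l_pos hC.r_pos j).le
      have hmul := congrArg (fun z => ENNReal.ofReal (tp l r j) * z) hrec
      simp only [mul_add, ← mul_assoc, ← ENNReal.ofReal_mul htp0] at hmul
      have htpr : tp l r j * r j = tp l r (j - 1) * l j := by
        have h := tp_succ hC.l_pos hC.r_pos (j - 1)
        rwa [show j - 1 + 1 = j by omega] at h
      rw [htpr, ihj] at hmul
      rw [show j + 1 - 1 = j from rfl, hmul]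
      rcases Nat.lt_or_ge j k with h | h
      · rw [if_pos h, mul_one,
          min_eq_left (xp_mono hC.l_pos hC.r_pos h.le),
          ← ENNReal.ofReal_add (xp_nonneg hC.l_pos hC.r_pos j) htp0,
          ← xp_succ, min_eq_left (xp_mono hC.l_pos hC.r_pos h)]
      · rw [if_neg (by omega), mul_zero, add_zero,
          min_eq_right (xp_mono hC.l_pos hC.r_pos h),
          min_eq_right (xp_mono hC.l_pos hC.r_pos (by omega : k ≤ j + 1))]

end C

/-- If the chain hits `0` with probability `1`, then for every
`n ≥ 1`, `E[G_{T_∂}^n] = min(x_n, x_k)/(t_{n-1} l_n)`. -/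
theorem stmt9 {Ω : Type*} [MeasurableSpace Ω] (P : Measure Ω) (X : ℕ → Ω → ℕ)
    (k : ℕ) (l r : ℕ → ℝ) (hC : IsBDChain P X k l r)
    (hone : P {ω | ∃ m : ℕ, X m ω = 0} = 1) :
    ∀ n, 1 ≤ n →
      ∫⁻ ω, countE X n (hit0 X) ω ∂P =
        ENNReal.ofReal (min (xp l r n) (xp l r k) / (tp l r (n - 1) * l n)) := by
  intro n hn
  have hG := G_formula hC hone n hn
  have hae : ∀ᵐ ω ∂P, countE X n (hit0 X) ω = ∑' m : ℕ, if X m ω = n then (1:ℝ≥0∞) else 0 := by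
    filter_upwards [hC.absorb] with ω habs
    refine tsum_congr fun m => ?_
    refine if_congr ⟨fun h => h.2, fun h => ⟨?_, h⟩⟩ rfl rfl
    have hne : ∀ i, i ≤ m → X i ω ≠ 0 := by
      intro i him h0
      have := absorb_forever habs h0 m him
      omega
    unfold hit0 hitTime
    refine lt_of_lt_of_le (b := ((m + 1 : ℕ) : ℕ∞))
      (by exact_mod_cast Nat.lt_succ_self m) (le_sInf ?_)
    rintro x ⟨i, hi, rfl⟩
    have hi0 : X i ω = 0 := by simpa using hi
    have : m + 1 ≤ i := by
      by_contra hcon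
      exact hne i (by omega) hi0
    show ((m + 1 : ℕ) : ℕ∞) ≤ (i : ℕ∞)
    exact_mod_cast this
  rw [lintegral_congr_ae hae,
    lintegral_tsum fun m =>
      (Measurable.ite (msX hC m n) measurable_const measurable_const).aemeasurable,
    tsum_congr fun m => lint_ind1 hC m n]
  have htl : (0:ℝ) < tp l r (n - 1) * l n :=
    mul_pos (tp_pos hC.l_pos hC.r_pos (n - 1)) (hC.l_pos n hn)
  rw [ENNReal.ofReal_div_of_pos htl,
    ENNReal.eq_div_iff (by simp [ENNReal.ofReal_pos.mpr htl, (ENNReal.ofReal_pos.mpr htl).ne'])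
      ENNReal.ofReal_ne_top]
  exact hG
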